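/- Let l ≥ 2. The germ at 0 of the complex curve W_l = {P_l(λ,v) = 0} ⊂ ℂ² is smooth, and its tangent line at the origin is {λ + v = 0}-translate class, i.e., the linear part of P_l at 0 is a nonzero multiple of λ + v; in particular W_l is transverse at 0 to the line {v = 0}. -/

import Mathlib

/-!
Write `D(λ, μ) = det (H_l + λ Id) = P(λ, μ²)`; the coefficients of `P` at `1`, `u`, `v` are
those of `D` at `1`, `λ`, `μ²`. Every off-diagonal entry is a multiple of `μ`, hence a
permutation moving `k` indices only contributes in `μ`-degree `≥ k`. So the coefficients of `1`
and `λ` in `D` come from the diagonal `∏ (λ - i(l - i))`, whose `i = 0` factor is `λ`: they are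
`0` and `c = ∏_{0 < i < l} -i(l - i) ≠ 0`. At `λ⁰μ²`, the entry `λ` at `(0, 0)` kills the
permutations fixing `0`, and column `0` vanishes below row `1`, so only the transposition
`(0 1)` contributes: `-(l - 1) ∏_{1 < i < l} -i(l - i) = c`.
-/

open MvPolynomial Matrix Finset Equiv

theorem Equiv.Perm.three_le_card_support_of_apply_eq {α : Type*} [Fintype α] [DecidableEq α]
    {τ : Perm α} {a b : α} (hab : a ≠ b) (h : τ a = b) (hτ : τ ≠ swap a b) :
    3 ≤ #τ.support := by
  have h2 : 2 ≤ #τ.support := Perm.two_le_card_support_of_ne_one (by rintro rfl; exact hab h)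
  refine lt_of_le_of_ne h2 fun h2' => hτ ?_
  obtain ⟨x, y, -, rfl⟩ := Perm.card_support_eq_two.mp h2'.symm
  rw [swap_apply_def] at h
  split_ifs at h with hx hy
  · rw [← hx, ← h]
  · rw [← hy, ← h, swap_comm]
  · exact absurd h hab

theorem Finset.prod_perm_swap {n M : Type*} [Fintype n] [DecidableEq n] [CommMonoid M]
    (f : n → n → M) {a b : n} (hab : a ≠ b) :
    ∏ i, f (swap a b i) i = f b a * f a b * ∏ i ∈ (univ.erase a).erase b, f i i := by
  rw [← mul_prod_erase univ _ (mem_univ a),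
    ← mul_prod_erase _ _ (mem_erase.mpr ⟨hab.symm, mem_univ b⟩), swap_apply_left,
    swap_apply_right, mul_assoc]
  congr 2
  refine prod_congr rfl fun i hi => ?_
  simp only [mem_erase] at hi
  rw [swap_apply_of_ne_of_ne hi.2.1 hi.1]

namespace MvPolynomial

section CommSemiring

variable {σ R : Type*} [CommSemiring R]

theorem coeff_eq_zero_of_X_pow_dvd {j : σ} {k : ℕ} {p : MvPolynomial σ R} {m : σ →₀ ℕ}
    (h : X j ^ k ∣ p) (hm : m j < k) : coeff m p = 0 := by
  classical
  obtain ⟨q, rfl⟩ := h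
  rw [X_pow_eq_monomial, coeff_monomial_mul', if_neg]
  rw [Finsupp.single_le_iff]
  omega

theorem coeff_single_X_pow_mul (j : σ) (k : ℕ) (p : MvPolynomial σ R) :
    coeff (Finsupp.single j k) (X j ^ k * p) = constantCoeff p := by
  classical
  rw [X_pow_eq_monomial, coeff_monomial_mul', if_pos le_rfl, tsub_self, one_mul, constantCoeff_eq]

variable [Fintype σ]

theorem aeval_X_pow_monomial (w u : σ →₀ ℕ) (r : R) :
    aeval (fun i => (X i : MvPolynomial σ R) ^ w i) (monomial u r) = monomial (w * u) r := by
  rw [aeval_monomial, monomial_eq, Finsupp.prod_fintype _ _ fun _ => pow_zero _,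
    Finsupp.prod_fintype _ _ fun _ => pow_zero _]
  simp [Finsupp.mul_apply, pow_mul, algebraMap_eq]

theorem coeff_mul_aeval_X_pow {w : σ →₀ ℕ} (hw : ∀ i, w i ≠ 0) (m : σ →₀ ℕ)
    (p : MvPolynomial σ R) :
    coeff (w * m) (aeval (fun i => X i ^ w i) p) = coeff m p := by
  have hinj : ∀ u, w * u = w * m ↔ u = m := fun u =>
    ⟨fun h => Finsupp.ext fun i => by
      simpa [Finsupp.mul_apply, hw i] using DFunLike.congr_fun h i, by rintro rfl; rfl⟩
  induction p using MvPolynomial.induction_on' with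
  | monomial u r =>
    classical
    rw [aeval_X_pow_monomial, coeff_monomial, coeff_monomial]
    simp only [hinj]
  | add p q hp hq => rw [map_add, coeff_add, coeff_add, hp, hq]

end CommSemiring

section Determinant

variable {σ R n : Type*} [CommRing R] [Fintype n] [DecidableEq n]

theorem coeff_det (M : Matrix n n (MvPolynomial σ R)) (m : σ →₀ ℕ) :
    coeff m M.det = ∑ τ : Perm n, (Perm.sign τ : R) * coeff m (∏ i, M (τ i) i) := by
  rw [det_apply', coeff_sum]
  refine sum_congr rfl fun τ _ => ?_
  rw [← map_intCast (C : R →+* MvPolynomial σ R), coeff_C_mul]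

theorem X_pow_card_support_dvd_prod {M : Matrix n n (MvPolynomial σ R)} {j : σ}
    (hM : ∀ i i', i ≠ i' → X j ∣ M i i') (τ : Perm n) :
    X j ^ #τ.support ∣ ∏ i, M (τ i) i := by
  rw [← prod_const]
  exact (prod_dvd_prod_of_dvd _ _ fun i hi => hM _ _ (Perm.mem_support.mp hi)).trans
    (prod_dvd_prod_of_subset _ _ _ (subset_univ _))

theorem coeff_det_eq_coeff_prod_diag {M : Matrix n n (MvPolynomial σ R)} {j : σ}
    (hM : ∀ i i', i ≠ i' → X j ∣ M i i') {m : σ →₀ ℕ} (hm : m j < 2) :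
    coeff m M.det = coeff m (∏ i, M i i) := by
  rw [coeff_det, sum_eq_single (1 : Perm n)]
  · simp
  · intro τ _ hτ
    rw [coeff_eq_zero_of_X_pow_dvd (X_pow_card_support_dvd_prod hM τ)
      (hm.trans_le (Perm.two_le_card_support_of_ne_one hτ)), mul_zero]
  · simp

theorem coeff_det_eq_neg_coeff_prod_swap {M : Matrix n n (MvPolynomial σ R)} {j k : σ}
    (hM : ∀ i i', i ≠ i' → X j ∣ M i i') {a b : n} (hab : a ≠ b) (hdiag : X k ∣ M a a)
    (hcol : ∀ i, i ≠ a → i ≠ b → M i a = 0) {m : σ →₀ ℕ} (hmj : m j < 3)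
    (hmk : m k = 0) :
    coeff m M.det = -coeff m (∏ i, M (swap a b i) i) := by
  rw [coeff_det, sum_eq_single (swap a b)]
  · simp [Perm.sign_swap hab]
  · intro τ _ hτ
    suffices coeff m (∏ i, M (τ i) i) = 0 by rw [this, mul_zero]
    by_cases hτa : τ a = a
    · refine coeff_eq_zero_of_X_pow_dvd (j := k) (k := 1) ?_ (by omega)
      rw [pow_one]
      have hfactor := dvd_prod_of_mem (fun i => M (τ i) i) (mem_univ a)
      simp only [hτa] at hfactor
      exact hdiag.trans hfactor
    by_cases hτb : τ a = b
    · exact coeff_eq_zero_of_X_pow_dvd (X_pow_card_support_dvd_prod hM τ)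
        (hmj.trans_le (Perm.three_le_card_support_of_apply_eq hab hτb hτ))
    · rw [prod_eq_zero (f := fun i => M (τ i) i) (mem_univ a) (hcol _ hτa hτb), coeff_zero]
  · simp

end Determinant

end MvPolynomial

/-- `H_l + λ Id` over `ℂ[λ, μ]`, with `X 0 = λ` and `X 1 = μ`. -/
noncomputable def shiftedH (l : ℕ) : Matrix (Fin l) (Fin l) (MvPolynomial (Fin 2) ℂ) :=
  Matrix.of fun i j : Fin l =>
    (if (i : ℕ) = (j : ℕ) then X 0 - C (((i : ℕ) * (l - (i : ℕ)) : ℕ) : ℂ)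
    else if (i : ℕ) + 1 = (j : ℕ) then X 1 * C ((((i : ℕ) + 1 : ℕ)) : ℂ)
    else if (j : ℕ) + 1 = (i : ℕ) then X 1 * C (((l - (i : ℕ) : ℕ)) : ℂ)
    else 0 : MvPolynomial (Fin 2) ℂ)

namespace shiftedH

variable {l : ℕ}

theorem apply_self (i : Fin l) : shiftedH l i i = X 0 - C (((i : ℕ) * (l - i) : ℕ) : ℂ) := by
  simp [shiftedH]

theorem apply_of_succ_eq {i j : Fin l} (h : (i : ℕ) + 1 = j) :
    shiftedH l i j = X 1 * C (((i : ℕ) + 1 : ℕ) : ℂ) := by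
  rw [shiftedH, of_apply, if_neg (by omega), if_pos h]

theorem apply_of_eq_succ {i j : Fin l} (h : (j : ℕ) + 1 = i) :
    shiftedH l i j = X 1 * C ((l - i : ℕ) : ℂ) := by
  rw [shiftedH, of_apply, if_neg (by omega), if_neg (by omega), if_pos h]

theorem apply_eq_zero {i j : Fin l} (h₀ : (i : ℕ) ≠ j) (h₁ : (i : ℕ) + 1 ≠ j)
    (h₂ : (j : ℕ) + 1 ≠ i) : shiftedH l i j = 0 := by
  rw [shiftedH, of_apply, if_neg h₀, if_neg h₁, if_neg h₂]

theorem X_one_dvd_apply {i j : Fin l} (h : i ≠ j) : X 1 ∣ shiftedH l i j := by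
  simp only [shiftedH, of_apply, if_neg (Fin.val_ne_of_ne h)]
  split_ifs
  · exact dvd_mul_right _ _
  · exact dvd_mul_right _ _
  · exact dvd_zero _

theorem constantCoeff_det (hl : 0 < l) : constantCoeff (shiftedH l).det = 0 := by
  rw [constantCoeff_eq, coeff_det_eq_coeff_prod_diag (j := 1) (fun _ _ h => X_one_dvd_apply h)
    (by simp)]
  refine coeff_eq_zero_of_X_pow_dvd (j := 0) (k := 1) ?_ (by simp)
  simpa [apply_self] using dvd_prod_of_mem (fun i => shiftedH l i i) (mem_univ ⟨0, hl⟩)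

theorem coeff_single_zero_one_det (hl : 0 < l) :
    coeff (Finsupp.single 0 1) (shiftedH l).det
      = ∏ i ∈ univ.erase (⟨0, hl⟩ : Fin l), -(((i : ℕ) * (l - i) : ℕ) : ℂ) := by
  rw [coeff_det_eq_coeff_prod_diag (j := 1) (fun _ _ h => X_one_dvd_apply h) (by simp),
    ← mul_prod_erase univ _ (mem_univ ⟨0, hl⟩), apply_self]
  simp only [zero_mul, Nat.cast_zero, map_zero, sub_zero]
  rw [← pow_one (X 0), coeff_single_X_pow_mul, map_prod]
  simp [apply_self]

theorem coeff_single_one_two_det (hl : 2 ≤ l) :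
    coeff (Finsupp.single 1 2) (shiftedH l).det
      = ∏ i ∈ univ.erase (⟨0, by omega⟩ : Fin l), -(((i : ℕ) * (l - i) : ℕ) : ℂ) := by
  set a : Fin l := ⟨0, by omega⟩
  set b : Fin l := ⟨1, hl⟩
  have hab : a ≠ b := by simp [a, b, Fin.ext_iff]
  have hdiag : X 0 ∣ shiftedH l a a := by simp [apply_self, a]
  have hcol : ∀ i, i ≠ a → i ≠ b → shiftedH l i a = 0 := fun i ha hb =>
    apply_eq_zero (by simpa [a, Fin.ext_iff] using ha) (by simp [a])
      (by simpa [a, b, Fin.ext_iff, eq_comm] using hb)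
  rw [coeff_det_eq_neg_coeff_prod_swap (j := 1) (k := 0) (fun _ _ h => X_one_dvd_apply h) hab
      hdiag hcol (by simp) (by simp), prod_perm_swap (shiftedH l) hab,
    apply_of_eq_succ (by simp [a, b]), apply_of_succ_eq (by simp [a, b]),
    ← mul_prod_erase _ _ (mem_erase.mpr ⟨hab.symm, mem_univ b⟩)]
  rw [show ∀ x y q : MvPolynomial (Fin 2) ℂ, X 1 * x * (X 1 * y) * q = X 1 ^ 2 * (x * y * q) by
      intros; ring, coeff_single_X_pow_mul, map_mul, map_mul, constantCoeff_C, constantCoeff_C,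
    map_prod]
  simp [apply_self, a, b]

theorem prod_erase_zero_ne_zero (hl : 0 < l) :
    ∏ i ∈ univ.erase (⟨0, hl⟩ : Fin l), -(((i : ℕ) * (l - i) : ℕ) : ℂ) ≠ 0 := by
  refine prod_ne_zero_iff.mpr fun i hi => ?_
  have hi0 : (i : ℕ) ≠ 0 := fun h => (mem_erase.mp hi).1 (Fin.ext h)
  have hil := i.isLt
  simp only [ne_eq, neg_eq_zero, Nat.cast_eq_zero, mul_eq_zero, not_or]
  omega

end shiftedH

/-- the germ at 0 of W_l = {P_l(λ,v) = 0} is smooth with the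
linear part of P_l at the origin a nonzero multiple of λ + v (hence W_l is
transverse at 0 to {v = 0}): P_l(0,0) = 0 and the coefficients of u and v in
P_l are equal and nonzero.  Here P_l is defined by det(H_l + λId) = P_l(λ,μ²)
(variables of the determinant: X 0 = λ, X 1 = μ; of P: X 0 = u, X 1 = v). -/
theorem stmt19 (l : ℕ) (hl : 2 ≤ l) (P : MvPolynomial (Fin 2) ℂ)
    (hP : (Matrix.of fun i j : Fin l =>
        (if (i : ℕ) = (j : ℕ) then X 0 - C (((i : ℕ) * (l - (i : ℕ)) : ℕ) : ℂ)
        else if (i : ℕ) + 1 = (j : ℕ) then X 1 * C ((((i : ℕ) + 1 : ℕ)) : ℂ)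
        else if (j : ℕ) + 1 = (i : ℕ) then X 1 * C (((l - (i : ℕ) : ℕ)) : ℂ)
        else 0 : MvPolynomial (Fin 2) ℂ)).det
      = aeval ![X 0, (X 1) ^ 2] P) :
    ∃ c : ℂ, c ≠ 0 ∧ constantCoeff P = 0 ∧
      MvPolynomial.coeff (Finsupp.single (0 : Fin 2) 1) P = c ∧
      MvPolynomial.coeff (Finsupp.single (1 : Fin 2) 1) P = c := by
  have hl0 : 0 < l := by omega
  set w : Fin 2 →₀ ℕ := Finsupp.single 0 1 + Finsupp.single 1 2
  have hw : ∀ i, w i ≠ 0 := fun i => by fin_cases i <;> simp [w]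
  have hsubst : ![X 0, X 1 ^ 2] = fun i => (X i : MvPolynomial (Fin 2) ℂ) ^ w i := by
    funext i; fin_cases i <;> simp [w]
  have hcoeff (m : Fin 2 →₀ ℕ) : coeff m P = coeff (w * m) (shiftedH l).det := by
    rw [show (shiftedH l).det = aeval ![X 0, X 1 ^ 2] P from hP, hsubst,
      coeff_mul_aeval_X_pow hw]
  have hw₀ : w * Finsupp.single 0 1 = Finsupp.single 0 1 := by
    ext i; fin_cases i <;> simp [w]
  have hw₁ : w * Finsupp.single 1 1 = Finsupp.single 1 2 := by
    ext i; fin_cases i <;> simp [w]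
  refine ⟨_, shiftedH.prod_erase_zero_ne_zero hl0, ?_, ?_, ?_⟩
  · rw [constantCoeff_eq, hcoeff, mul_zero, ← constantCoeff_eq, shiftedH.constantCoeff_det hl0]
  · rw [hcoeff, hw₀, shiftedH.coeff_single_zero_one_det]
  · rw [hcoeff, hw₁, shiftedH.coeff_single_one_two_det hl]
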